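/- arXiv:1702.04943 — 5 statements merged into one kernel-verified Lean document; each statement's English description precedes it below -/
import Mathlib

section
/- If a greedy algorithm for maximizing a monotone submodular set function f with f(∅) = 0 over subsets of size at most C outputs S*, then f(S*) ≥ (1 - 1/e) · max{ f(S) : |S| ≤ C }. -/
/-- Greedy (1 - 1/e)-approximation for maximizing a monotone submodular set function
with `f(∅) = 0` under a cardinality constraint `|S| ≤ C`. -/
theorem greedy_cardinality_approx
    {V : Type*} [Fintype V] [DecidableEq V]
    (f : Finset V → ℝ) (C : ℕ)
    (hempty : f ∅ = 0)
    (hmono : ∀ A B : Finset V, A ⊆ B → f A ≤ f B)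
    (hsub : ∀ A B : Finset V, A ⊆ B → ∀ x ∉ B,
      f (insert x B) - f B ≤ f (insert x A) - f A)
    (S : ℕ → Finset V) (hS0 : S 0 = ∅)
    (hstep : ∀ t < C, ∃ x ∉ S t, S (t + 1) = insert x (S t) ∧
      ∀ y ∉ S t, f (insert y (S t)) ≤ f (insert x (S t))) :
    ∀ T : Finset V, T.card ≤ C →
      (1 - 1 / Real.exp 1) * f T ≤ f (S C) := by
  intro T hT
  have hfnn : ∀ A : Finset V, 0 ≤ f A := fun A =>
    hempty ▸ hmono ∅ A (Finset.empty_subset A)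
  -- submodular union bound
  have hunion : ∀ A T' : Finset V, f (A ∪ T') ≤ f A + ∑ y ∈ T', (f (insert y A) - f A) := by
    intro A T'
    induction T' using Finset.induction_on with
    | empty => simp
    | @insert y T' hy ih =>
      rw [Finset.union_insert, Finset.sum_insert hy]
      by_cases hmem : y ∈ A ∪ T'
      · rw [Finset.insert_eq_self.mpr hmem]
        have : 0 ≤ f (insert y A) - f A :=
          sub_nonneg.mpr (hmono A _ (Finset.subset_insert y A))
        linarith
      · have := hsub A (A ∪ T') Finset.subset_union_left y hmem
        linarith
  rcases Nat.eq_zero_or_pos C with hC0 | hCpos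
  · subst hC0
    have : T = ∅ := Finset.card_eq_zero.mp (Nat.le_zero.mp hT)
    rw [this, hS0, hempty]
    simp
  have hCpos' : (0:ℝ) < C := by exact_mod_cast hCpos
  have hC1 : (1:ℝ) ≤ C := by exact_mod_cast hCpos
  have hr : (0:ℝ) ≤ 1 - 1 / (C:ℝ) := by
    have : 1 / (C:ℝ) ≤ 1 := by
      rw [div_le_one hCpos']; exact hC1
    linarith
  -- per-step contraction
  have hstepbd : ∀ t < C, f T - f (S (t+1)) ≤ (1 - 1/(C:ℝ)) * (f T - f (S t)) := by
    intro t ht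
    obtain ⟨x, hx, hSe, hmax⟩ := hstep t ht
    have h1 : f T ≤ f (S t ∪ T) := hmono T _ Finset.subset_union_right
    have h2 := hunion (S t) T
    have hg : 0 ≤ f (S (t+1)) - f (S t) := by
      rw [hSe]; exact sub_nonneg.mpr (hmono _ _ (Finset.subset_insert x _))
    have hterm : ∀ y ∈ T, f (insert y (S t)) - f (S t) ≤ f (S (t+1)) - f (S t) := by
      intro y _
      by_cases hyS : y ∈ S t
      · rw [Finset.insert_eq_self.mpr hyS]; linarith
      · rw [hSe]; linarith [hmax y hyS]
    have hsum : ∑ y ∈ T, (f (insert y (S t)) - f (S t)) ≤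
        (T.card : ℝ) * (f (S (t+1)) - f (S t)) := by
      have := Finset.sum_le_card_nsmul T _ _ hterm
      simpa [nsmul_eq_mul] using this
    have hcard : (T.card : ℝ) ≤ (C:ℝ) := by exact_mod_cast hT
    have hmulc : (T.card:ℝ) * (f (S (t+1)) - f (S t)) ≤ (C:ℝ) * (f (S (t+1)) - f (S t)) :=
      mul_le_mul_of_nonneg_right hcard hg
    have key : f T - f (S t) ≤ (C:ℝ) * (f (S (t+1)) - f (S t)) := by linarith
    have h3 : (1/(C:ℝ)) * (f T - f (S t)) ≤ f (S (t+1)) - f (S t) := by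
      rw [one_div, inv_mul_le_iff₀ hCpos']
      linarith
    calc f T - f (S (t+1))
        = (f T - f (S t)) - (f (S (t+1)) - f (S t)) := by ring
      _ ≤ (f T - f (S t)) - (1/(C:ℝ)) * (f T - f (S t)) := by linarith
      _ = (1 - 1/(C:ℝ)) * (f T - f (S t)) := by ring
  -- iterate
  have hiter : ∀ t, t ≤ C → f T - f (S t) ≤ (1 - 1/(C:ℝ))^t * (f T - f (S 0)) := by
    intro t
    induction t with
    | zero => intro _; simp
    | succ n ih =>
      intro h
      have hn := ih (Nat.le_of_succ_le h)
      have hb := hstepbd n (by omega)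
      calc f T - f (S (n+1)) ≤ (1 - 1/(C:ℝ)) * (f T - f (S n)) := hb
        _ ≤ (1 - 1/(C:ℝ)) * ((1 - 1/(C:ℝ))^n * (f T - f (S 0))) :=
            mul_le_mul_of_nonneg_left hn hr
        _ = (1 - 1/(C:ℝ))^(n+1) * (f T - f (S 0)) := by ring
  have hfin := hiter C le_rfl
  rw [hS0, hempty, sub_zero] at hfin
  -- (1 - 1/C)^C ≤ exp (-1)
  have hexp1 : (1 - 1/(C:ℝ)) ≤ Real.exp (-(1/(C:ℝ))) := by
    have := Real.add_one_le_exp (-(1/(C:ℝ)))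
    linarith
  have hexp2 : (1 - 1/(C:ℝ))^C ≤ (Real.exp (-(1/(C:ℝ))))^C :=
    pow_le_pow_left₀ hr hexp1 C
  have hexp3 : (Real.exp (-(1/(C:ℝ))))^C = Real.exp (-1) := by
    rw [← Real.exp_nat_mul]
    congr 1
    field_simp
  have hexp4 : (1 - 1/(C:ℝ))^C ≤ 1 / Real.exp 1 := by
    rw [hexp3, Real.exp_neg, inv_eq_one_div] at hexp2
    exact hexp2
  have hmul : (1 - 1/(C:ℝ))^C * f T ≤ (1 / Real.exp 1) * f T :=
    mul_le_mul_of_nonneg_right hexp4 (hfnn T)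
  have : (1 - 1 / Real.exp 1) * f T = f T - (1 / Real.exp 1) * f T := by ring
  rw [this]
  linarith
end

section
/- For a monotone submodular f with f(∅)=0, the greedy algorithm run for t steps (adding at each step a marginally maximal element) produces a set S_t with f(S_t) ≥ (1 - (1 - 1/C)^t) · max{ f(S) : |S| ≤ C }. -/
/-!
Let `T` be any set with `|T| ≤ C`. By submodularity the gain `f (S ∪ T) - f S` is at most the
sum of the single-element gains of the elements of `T`, each of which is at most the greedy gain,
so every greedy step closes at least a `1/C` fraction of the gap `f T - f S`. The gap therefore
shrinks geometrically with ratio `1 - 1/C`, starting from `f T - f ∅ = f T`.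
-/

section

open Finset

variable {V : Type*} [DecidableEq V]

/-- Submodularity in its diminishing-returns form. -/
def HasDiminishingReturns (f : Finset V → ℝ) : Prop :=
  ∀ A B : Finset V, A ⊆ B → ∀ x ∉ B, f (insert x B) - f B ≤ f (insert x A) - f A

def IsGreedyStep (f : Finset V → ℝ) (A A' : Finset V) : Prop :=
  ∃ x ∉ A, A' = insert x A ∧ ∀ y ∉ A, f (insert y A) ≤ f (insert x A)

namespace HasDiminishingReturns

variable {f : Finset V → ℝ}

theorem sub_le_sum_marginal (hmono : Monotone f) (hsub : HasDiminishingReturns f)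
    (A B : Finset V) : f (A ∪ B) - f A ≤ ∑ y ∈ B, (f (insert y A) - f A) := by
  induction B using Finset.induction_on with
  | empty => simp
  | @insert x B hxB ih =>
    rw [union_insert, sum_insert hxB]
    by_cases hx : x ∈ A ∪ B
    · have hgain : 0 ≤ f (insert x A) - f A := sub_nonneg.mpr (hmono (subset_insert x A))
      rw [insert_eq_self.mpr hx]
      linarith
    · linarith [hsub A (A ∪ B) subset_union_left x hx]

theorem sub_le_card_mul (hmono : Monotone f) (hsub : HasDiminishingReturns f)
    {A : Finset V} {δ : ℝ} (hδ : ∀ y, f (insert y A) - f A ≤ δ) (B : Finset V) :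
    f B - f A ≤ #B * δ :=
  calc f B - f A ≤ f (A ∪ B) - f A := by gcongr; exact hmono subset_union_right
    _ ≤ ∑ y ∈ B, (f (insert y A) - f A) := sub_le_sum_marginal hmono hsub A B
    _ ≤ ∑ _y ∈ B, δ := sum_le_sum fun y _ ↦ hδ y
    _ = #B * δ := by rw [sum_const, nsmul_eq_mul]

end HasDiminishingReturns

/-- With `c = 0` this still holds, because `g / 0 = 0`. -/
theorem sub_le_one_sub_one_div_mul_of_le_mul {g Δ c : ℝ} (hc : 0 ≤ c) (hΔ : 0 ≤ Δ) (h : g ≤ c * Δ) :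
    g - Δ ≤ (1 - 1 / c) * g := by
  have : g / c ≤ Δ := div_le_of_le_mul₀ hc hΔ (by linarith)
  rw [one_sub_mul, one_div_mul_eq_div]
  linarith

theorem IsGreedyStep.sub_le_one_sub_one_div_mul {f : Finset V → ℝ} (hmono : Monotone f)
    (hsub : HasDiminishingReturns f) {A A' T : Finset V} (hstep : IsGreedyStep f A A')
    {C : ℕ} (hT : #T ≤ C) : f T - f A' ≤ (1 - 1 / (C : ℝ)) * (f T - f A) := by
  obtain ⟨x, -, rfl, hmax⟩ := hstep
  have hgain : 0 ≤ f (insert x A) - f A := sub_nonneg.mpr (hmono (subset_insert x A))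
  have hmarginal : ∀ y, f (insert y A) - f A ≤ f (insert x A) - f A := by
    intro y
    by_cases hy : y ∈ A
    · rw [insert_eq_self.mpr hy, sub_self]
      exact hgain
    · linarith [hmax y hy]
  have hgap : f T - f A ≤ C * (f (insert x A) - f A) :=
    (hsub.sub_le_card_mul hmono hmarginal T).trans (by gcongr)
  have := sub_le_one_sub_one_div_mul_of_le_mul (Nat.cast_nonneg C) hgain hgap
  linarith

end

theorem greedy_partial_approx_general
    {V : Type*} [DecidableEq V]
    (f : Finset V → ℝ) (C : ℕ)
    (hempty : f ∅ = 0)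
    (hmono : ∀ A B : Finset V, A ⊆ B → f A ≤ f B)
    (hsub : ∀ A B : Finset V, A ⊆ B → ∀ x ∉ B,
      f (insert x B) - f B ≤ f (insert x A) - f A)
    (t : ℕ) (S : ℕ → Finset V) (hS0 : S 0 = ∅)
    (hstep : ∀ t' < t, ∃ x ∉ S t', S (t' + 1) = insert x (S t') ∧
      ∀ y ∉ S t', f (insert y (S t')) ≤ f (insert x (S t'))) :
    ∀ T : Finset V, T.card ≤ C →
      (1 - (1 - 1 / (C : ℝ)) ^ t) * f T ≤ f (S t) := by
  intro T hT
  have hgap : f T - f (S t) ≤ (1 - 1 / (C : ℝ)) ^ t * (f T - f (S 0)) :=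
    le_geom (u := fun i ↦ f T - f (S i)) (Nat.one_sub_one_div_cast_nonneg C) t fun i hi ↦
      IsGreedyStep.sub_le_one_sub_one_div_mul (fun _ _ ↦ hmono _ _) hsub (hstep i hi) hT
  rw [hS0, hempty, sub_zero] at hgap
  linarith

/-- After `t` greedy steps, a monotone submodular function with `f(∅)=0` satisfies
`f(S_t) ≥ (1 - (1 - 1/C)^t) · max{ f(T) : |T| ≤ C }`. -/
theorem greedy_partial_approx
    {V : Type*} [Fintype V] [DecidableEq V]
    (f : Finset V → ℝ) (C : ℕ) (hC : 0 < C)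
    (hempty : f ∅ = 0)
    (hmono : ∀ A B : Finset V, A ⊆ B → f A ≤ f B)
    (hsub : ∀ A B : Finset V, A ⊆ B → ∀ x ∉ B,
      f (insert x B) - f B ≤ f (insert x A) - f A)
    (t : ℕ) (S : ℕ → Finset V) (hS0 : S 0 = ∅)
    (hstep : ∀ t' < t, ∃ x ∉ S t', S (t' + 1) = insert x (S t') ∧
      ∀ y ∉ S t', f (insert y (S t')) ≤ f (insert x (S t'))) :
    ∀ T : Finset V, T.card ≤ C →
      (1 - (1 - 1 / (C : ℝ)) ^ t) * f T ≤ f (S t) :=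
  greedy_partial_approx_general f C hempty hmono hsub t S hS0 hstep
end

section
/- The femto-caching objective f(S) = Σ_{i=1}^N Σ_{k=1}^K p_k^i (1 - ∏_{(n,j)∈S}(1 - u_{kn}^i · q_{ij})) on subsets S of K × M is monotone and submodular. -/
private lemma prod_mono_subset {α : Type*} [DecidableEq α] (w : α → ℝ)
    (h0 : ∀ y, 0 ≤ w y) (h1 : ∀ y, w y ≤ 1) {A B : Finset α} (hAB : A ⊆ B) :
    ∏ y ∈ B, w y ≤ ∏ y ∈ A, w y := by
  rw [← Finset.prod_sdiff hAB]
  calc (∏ y ∈ B \ A, w y) * ∏ y ∈ A, w y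
      ≤ 1 * ∏ y ∈ A, w y := by
        apply mul_le_mul_of_nonneg_right _ (Finset.prod_nonneg fun y _ => h0 y)
        exact Finset.prod_le_one (fun y _ => h0 y) (fun y _ => h1 y)
    _ = ∏ y ∈ A, w y := one_mul _

/-- The femto-caching objective
`f(S) = Σ_i Σ_k p_k^i (1 - ∏_{(n,j)∈S}(1 - u_{kn}^i q_{ij}))` on subsets of `K × M`
is monotone and submodular. -/
theorem femto_schr_monotone_submodular
    {N K M : Type*} [Fintype N] [Fintype K] [Fintype M]
    [DecidableEq K] [DecidableEq M]
    (p : N → K → ℝ) (u : N → K → K → ℝ) (q : N → M → ℝ)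
    (hp : ∀ i k, 0 ≤ p i k)
    (hu : ∀ i k n, u i k n ∈ Set.Icc (0 : ℝ) 1)
    (hq : ∀ i j, q i j ∈ Set.Icc (0 : ℝ) 1) :
    (∀ A B : Finset (K × M), A ⊆ B →
      (∑ i, ∑ k, p i k * (1 - ∏ x ∈ A, (1 - u i k x.1 * q i x.2)))
        ≤ ∑ i, ∑ k, p i k * (1 - ∏ x ∈ B, (1 - u i k x.1 * q i x.2)))
    ∧ (∀ A B : Finset (K × M), A ⊆ B → ∀ x ∉ B,
      (∑ i, ∑ k, p i k * (1 - ∏ y ∈ insert x B, (1 - u i k y.1 * q i y.2)))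
          - (∑ i, ∑ k, p i k * (1 - ∏ y ∈ B, (1 - u i k y.1 * q i y.2)))
        ≤ (∑ i, ∑ k, p i k * (1 - ∏ y ∈ insert x A, (1 - u i k y.1 * q i y.2)))
          - (∑ i, ∑ k, p i k * (1 - ∏ y ∈ A, (1 - u i k y.1 * q i y.2)))) := by
  have h0 : ∀ i k (y : K × M), 0 ≤ 1 - u i k y.1 * q i y.2 := fun i k y => by
    have hu' := hu i k y.1; have hq' := hq i y.2
    nlinarith [hu'.1, hu'.2, hq'.1, hq'.2]
  have h1 : ∀ i k (y : K × M), 1 - u i k y.1 * q i y.2 ≤ 1 := fun i k y => by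
    have hu' := hu i k y.1; have hq' := hq i y.2
    nlinarith [hu'.1, hq'.1]
  constructor
  · intro A B hAB
    refine Finset.sum_le_sum fun i _ => Finset.sum_le_sum fun k _ => ?_
    have := prod_mono_subset _ (h0 i k) (h1 i k) hAB
    nlinarith [hp i k]
  · intro A B hAB x hxB
    have hxA : x ∉ A := fun h => hxB (hAB h)
    have key : ∀ i k,
        p i k * (1 - ∏ y ∈ insert x B, (1 - u i k y.1 * q i y.2))
          - p i k * (1 - ∏ y ∈ B, (1 - u i k y.1 * q i y.2))
        ≤ p i k * (1 - ∏ y ∈ insert x A, (1 - u i k y.1 * q i y.2))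
          - p i k * (1 - ∏ y ∈ A, (1 - u i k y.1 * q i y.2)) := by
      intro i k
      rw [Finset.prod_insert hxB, Finset.prod_insert hxA]
      have hmono := prod_mono_subset _ (h0 i k) (h1 i k) hAB
      have hc : 0 ≤ u i k x.1 * q i x.2 :=
        mul_nonneg (hu i k x.1).1 (hq i x.2).1
      nlinarith [mul_le_mul_of_nonneg_left hmono (mul_nonneg (hp i k) hc)]
    calc (∑ i, ∑ k, p i k * (1 - ∏ y ∈ insert x B, (1 - u i k y.1 * q i y.2)))
          - (∑ i, ∑ k, p i k * (1 - ∏ y ∈ B, (1 - u i k y.1 * q i y.2)))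
        = ∑ i, ∑ k, (p i k * (1 - ∏ y ∈ insert x B, (1 - u i k y.1 * q i y.2))
            - p i k * (1 - ∏ y ∈ B, (1 - u i k y.1 * q i y.2))) := by
          rw [← Finset.sum_sub_distrib]; exact Finset.sum_congr rfl fun i _ => by
            rw [← Finset.sum_sub_distrib]
      _ ≤ ∑ i, ∑ k, (p i k * (1 - ∏ y ∈ insert x A, (1 - u i k y.1 * q i y.2))
            - p i k * (1 - ∏ y ∈ A, (1 - u i k y.1 * q i y.2))) :=
          Finset.sum_le_sum fun i _ => Finset.sum_le_sum fun k _ => key i k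
      _ = _ := by
          rw [← Finset.sum_sub_distrib]; exact Finset.sum_congr rfl fun i _ => by
            rw [← Finset.sum_sub_distrib]
end

section
/- For a monotone submodular function f with f(∅) = 0 on a ground set V, if S1 is a set obtained by cost-benefit greedy under a knapsack constraint Σ_{k∈S} s_k ≤ C and S2 is the output of the uniform (cardinality-style) greedy under the same knapsack budget, then max(f(S1), f(S2)) ≥ ½(1 - 1/e) · max{ f(S) : Σ_{k∈S} s_k ≤ C }. -/
/-!
While every item of a feasible set `T` is still in play, the cost-benefit greedy choice `x`
at the current selection `A` has ratio at least `(f T - f A) / C`, so accepting it shrinks the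
gap `f T - f A` by a factor `1 - s x / C ≤ exp (-s x / C)`. At the first step where an item
`z ∈ T` leaves play, it is the greedy choice and is rejected for lack of budget; the sizes
then add up to more than `C`, so `f (insert z A) ≥ (1 - 1/e) f T`. Submodularity bounds the
gain of `z` by `f {z}`, which the uniform greedy run attains since `z` alone fits the budget.
-/

open Finset Real

theorem Nat.exists_lt_and_not_succ {P : ℕ → Prop} {n : ℕ} (h0 : P 0) (hn : ¬ P n) :
    ∃ t < n, P t ∧ ¬ P (t + 1) := by
  by_contra! hstep
  have hall : ∀ t ≤ n, P t := by
    intro t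
    induction t with
    | zero => exact fun _ => h0
    | succ t ih => exact fun ht => hstep t (by omega) (ih (by omega))
  exact hn (hall n le_rfl)

section SetFunction

variable {V : Type*} [DecidableEq V]

def marginalGain (f : Finset V → ℝ) (A : Finset V) (x : V) : ℝ := f (insert x A) - f A

variable {f : Finset V → ℝ}

theorem marginalGain_nonneg (hmono : Monotone f) (A : Finset V) (x : V) :
    0 ≤ marginalGain f A x :=
  sub_nonneg.mpr (hmono (subset_insert x A))

variable (hmono : Monotone f)
  (hsub : ∀ A B : Finset V, A ⊆ B → ∀ x ∉ B, marginalGain f B x ≤ marginalGain f A x)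
include hmono hsub

theorem le_add_sum_marginalGain (A B : Finset V) :
    f (A ∪ B) ≤ f A + ∑ k ∈ B, marginalGain f A k := by
  induction B using Finset.induction_on with
  | empty => simp
  | insert b B hb ih =>
    rw [union_insert, sum_insert hb]
    by_cases hbAB : b ∈ A ∪ B
    · rw [insert_eq_of_mem hbAB]
      linarith [marginalGain_nonneg hmono A b]
    · have hgain : marginalGain f (A ∪ B) b = f (insert b (A ∪ B)) - f (A ∪ B) := rfl
      linarith [hsub A (A ∪ B) subset_union_left b hbAB]

theorem sub_le_budget_mul_ratio {s : V → ℝ} {C : ℝ} (hs : ∀ k, 0 < s k) {A T : Finset V}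
    {x : V} (hT : ∑ k ∈ T, s k ≤ C)
    (hmax : ∀ k ∈ T \ A, marginalGain f A k / s k ≤ marginalGain f A x / s x) :
    f T - f A ≤ C * (marginalGain f A x / s x) := by
  set ρ := marginalGain f A x / s x
  have hρ : 0 ≤ ρ := div_nonneg (marginalGain_nonneg hmono A x) (hs x).le
  have hTA : f T ≤ f (A ∪ (T \ A)) :=
    hmono (by rw [union_sdiff_self_eq_union]; exact subset_union_right)
  calc f T - f A ≤ ∑ k ∈ T \ A, marginalGain f A k := by
        linarith [le_add_sum_marginalGain hmono hsub A (T \ A)]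
    _ ≤ ∑ k ∈ T \ A, s k * ρ := sum_le_sum fun k hk => (div_le_iff₀' (hs k)).mp (hmax k hk)
    _ ≤ ∑ k ∈ T, s k * ρ :=
        sum_le_sum_of_subset_of_nonneg sdiff_subset fun k _ _ => mul_nonneg (hs k).le hρ
    _ = (∑ k ∈ T, s k) * ρ := (sum_mul _ _ _).symm
    _ ≤ C * ρ := mul_le_mul_of_nonneg_right hT hρ

end SetFunction

theorem sub_le_mul_exp_of_gain {D g F a b C : ℝ} (hC : 0 < C) (ha : 0 < a) (haC : a ≤ C)
    (hF : 0 ≤ F) (hgain : D ≤ C * (g / a)) (hD : D ≤ F * exp (-(b / C))) :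
    D - g ≤ F * exp (-((b + a) / C)) := by
  have hg : a / C * D ≤ g := by
    calc a / C * D ≤ a / C * (C * (g / a)) := mul_le_mul_of_nonneg_left hgain (by positivity)
      _ = g := by field_simp
  have hfac : 0 ≤ 1 - a / C := sub_nonneg.mpr ((div_le_one hC).mpr haC)
  calc D - g ≤ (1 - a / C) * D := by linarith
    _ ≤ (1 - a / C) * (F * exp (-(b / C))) := mul_le_mul_of_nonneg_left hD hfac
    _ ≤ exp (-(a / C)) * (F * exp (-(b / C))) :=
        mul_le_mul_of_nonneg_right (one_sub_le_exp_neg _) (by positivity)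
    _ = F * exp (-((b + a) / C)) := by rw [mul_left_comm, ← exp_add]; ring_nf

/-- `S t` is the selection and `R t` the set of items not yet examined after `t` rounds; each
round examines the remaining item of largest `score`, keeping it if it still fits the budget. -/
structure IsGreedyKnapsackRun {V : Type*} [Fintype V] [DecidableEq V]
    (score : Finset V → V → ℝ) (s : V → ℝ) (C : ℝ) (S R : ℕ → Finset V) : Prop where
  S_zero : S 0 = ∅
  R_zero : R 0 = univ
  step : ∀ t, (R t).Nonempty → ∃ x ∈ R t,
    (∀ y ∈ R t, score (S t) y ≤ score (S t) x) ∧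
    R (t + 1) = (R t).erase x ∧
    S (t + 1) = if (∑ k ∈ S t, s k) + s x ≤ C then insert x (S t) else S t

namespace IsGreedyKnapsackRun

variable {V : Type*} [Fintype V] [DecidableEq V] {score : Finset V → V → ℝ} {s : V → ℝ}
  {C : ℝ} {S R : ℕ → Finset V} (h : IsGreedyKnapsackRun score s C S R)
include h

theorem card_R {t : ℕ} (ht : t ≤ Fintype.card V) : #(R t) = Fintype.card V - t := by
  induction t with
  | zero => rw [h.R_zero, card_univ, Nat.sub_zero]
  | succ t ih =>
    have hcard := ih (by omega)
    obtain ⟨x, hx, -, hR, -⟩ := h.step t (card_pos.mp (by omega))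
    rw [hR, card_erase_of_mem hx, hcard]
    omega

theorem R_card_eq_empty : R (Fintype.card V) = ∅ :=
  card_eq_zero.mp (by rw [h.card_R le_rfl, Nat.sub_self])

theorem exists_step {t : ℕ} (ht : t < Fintype.card V) : ∃ x ∈ R t,
    (∀ y ∈ R t, score (S t) y ≤ score (S t) x) ∧
    R (t + 1) = (R t).erase x ∧
    S (t + 1) = if (∑ k ∈ S t, s k) + s x ≤ C then insert x (S t) else S t :=
  h.step t (card_pos.mp (by rw [h.card_R ht.le]; omega))

theorem S_subset_succ {t : ℕ} (ht : t < Fintype.card V) : S t ⊆ S (t + 1) := by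
  obtain ⟨x, -, -, -, hS⟩ := h.exists_step ht
  rw [hS]
  split_ifs
  exacts [subset_insert x (S t), Subset.rfl]

theorem S_mono {t t' : ℕ} (htt' : t ≤ t') (ht' : t' ≤ Fintype.card V) : S t ⊆ S t' := by
  induction t', htt' using Nat.le_induction with
  | base => exact Subset.rfl
  | succ t' _ ih => exact (ih (by omega)).trans (h.S_subset_succ (by omega))

theorem S_union_R_succ_subset {t : ℕ} (ht : t < Fintype.card V) :
    S (t + 1) ∪ R (t + 1) ⊆ S t ∪ R t := by
  obtain ⟨x, hx, -, hR, hS⟩ := h.exists_step ht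
  rw [hR, hS]
  split_ifs
  · exact union_subset (insert_subset (mem_union_right _ hx) subset_union_left)
      ((erase_subset x _).trans subset_union_right)
  · exact union_subset_union_right (erase_subset x _)

theorem disjoint_S_R {t : ℕ} (ht : t ≤ Fintype.card V) : Disjoint (S t) (R t) := by
  induction t with
  | zero => rw [h.S_zero]; exact disjoint_empty_left _
  | succ t ih =>
    obtain ⟨x, -, -, hR, hS⟩ := h.exists_step (by omega : t < Fintype.card V)
    have hdisj : Disjoint (insert x (S t)) (R (t + 1)) := by
      rw [hR, disjoint_insert_left]
      exact ⟨notMem_erase x _, (ih (by omega)).mono_right (erase_subset x _)⟩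
    rw [hS]
    split_ifs
    exacts [hdisj, hdisj.mono_left (subset_insert x _)]

theorem rejected_of_mem_of_notMem_succ {t : ℕ} (ht : t < Fintype.card V) {z : V}
    (hz : z ∈ S t ∪ R t) (hz' : z ∉ S (t + 1) ∪ R (t + 1)) :
    z ∈ R t ∧ (∀ y ∈ R t, score (S t) y ≤ score (S t) z) ∧
      C < (∑ k ∈ S t, s k) + s z := by
  obtain ⟨x, hx, hmax, hR, hS⟩ := h.exists_step ht
  rw [mem_union, not_or, hR, mem_erase, not_and_or, not_ne_iff] at hz'
  have hzR : z ∈ R t :=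
    (mem_union.mp hz).resolve_left fun hzS => hz'.1 (h.S_subset_succ ht hzS)
  obtain rfl : z = x := hz'.2.resolve_right (not_not.mpr hzR)
  refine ⟨hzR, hmax, lt_of_not_ge fun hfit => hz'.1 ?_⟩
  rw [hS, if_pos hfit]
  exact mem_insert_self z _

end IsGreedyKnapsackRun

section CostBenefit

variable {V : Type*} [Fintype V] [DecidableEq V] {f : Finset V → ℝ} {s : V → ℝ} {C : ℝ}
  {S R : ℕ → Finset V} (h : IsGreedyKnapsackRun (fun A y => marginalGain f A y / s y) s C S R)
  (hmono : Monotone f)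
  (hsub : ∀ A B : Finset V, A ⊆ B → ∀ x ∉ B, marginalGain f B x ≤ marginalGain f A x)
  (hs : ∀ k, 0 < s k) (hC : 0 < C) {T : Finset V} (hT : ∑ k ∈ T, s k ≤ C)
include h hmono hsub hs hC hT

theorem IsGreedyKnapsackRun.sub_le_mul_exp :
    ∀ t ≤ Fintype.card V, T ⊆ S t ∪ R t →
      f T - f (S t) ≤ (f T - f ∅) * exp (-((∑ k ∈ S t, s k) / C)) := by
  have hF : 0 ≤ f T - f ∅ := sub_nonneg.mpr (hmono (empty_subset T))
  intro t
  induction t with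
  | zero => simp [h.S_zero]
  | succ t ih =>
    intro ht hTt
    replace ht : t < Fintype.card V := ht
    have hTt' := hTt.trans (h.S_union_R_succ_subset ht)
    have hgap := ih (by omega) hTt'
    obtain ⟨x, hx, hmax, -, hS⟩ := h.exists_step ht
    rw [hS]
    split_ifs with hfit
    · have hxS : x ∉ S t := disjoint_right.mp (h.disjoint_S_R ht.le) hx
      have hsum : 0 ≤ ∑ k ∈ S t, s k := sum_nonneg fun k _ => (hs k).le
      have hgain := sub_le_budget_mul_ratio hmono hsub hs hT fun k hk =>
        hmax k (sdiff_le_iff.mpr hTt' hk)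
      rw [sum_insert hxS, add_comm (s x)]
      have := sub_le_mul_exp_of_gain hC (hs x) (by linarith) hF hgain hgap
      rwa [marginalGain, sub_sub_sub_cancel_right] at this
    · exact hgap

theorem IsGreedyKnapsackRun.subset_or_exists_singleton :
    T ⊆ S (Fintype.card V) ∨ ∃ z ∈ T,
      (1 - exp (-1)) * (f T - f ∅) ≤ (f (S (Fintype.card V)) - f ∅) + (f {z} - f ∅) := by
  set n := Fintype.card V
  by_cases hTn : T ⊆ S n
  · exact Or.inl hTn
  right
  have hP0 : T ⊆ S 0 ∪ R 0 := fun k _ => mem_union_right _ (h.R_zero ▸ mem_univ k)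
  have hPn : ¬ T ⊆ S n ∪ R n := by rwa [h.R_card_eq_empty, union_empty]
  obtain ⟨τ, hτ, hPτ, hPτ'⟩ :=
    Nat.exists_lt_and_not_succ (P := fun t => T ⊆ S t ∪ R t) hP0 hPn
  obtain ⟨z, hzT, hz⟩ := not_subset.mp hPτ'
  obtain ⟨hzR, hmax, hrej⟩ := h.rejected_of_mem_of_notMem_succ hτ (hPτ hzT) hz
  refine ⟨z, hzT, ?_⟩
  have hF : 0 ≤ f T - f ∅ := sub_nonneg.mpr (hmono (empty_subset T))
  have hzS : z ∉ S τ := disjoint_right.mp (h.disjoint_S_R hτ.le) hzR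
  have hgain := sub_le_budget_mul_ratio hmono hsub hs hT fun k hk =>
    hmax k (sdiff_le_iff.mpr hPτ hk)
  have hszC : s z ≤ C := (single_le_sum (fun k _ => (hs k).le) hzT).trans hT
  have hlast := sub_le_mul_exp_of_gain hC (hs z) hszC hF hgain
    (h.sub_le_mul_exp hmono hsub hs hC hT τ hτ.le hPτ)
  have hexp : exp (-((∑ k ∈ S τ, s k + s z) / C)) ≤ exp (-1) :=
    exp_le_exp.mpr (neg_le_neg ((one_le_div hC).mpr hrej.le))
  have hsingle : marginalGain f (S τ) z ≤ f {z} - f ∅ := by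
    simpa [marginalGain] using hsub ∅ (S τ) (empty_subset _) z hzS
  have hSτ : f (S τ) ≤ f (S n) := hmono (h.S_mono hτ.le le_rfl)
  linarith [mul_le_mul_of_nonneg_left hexp hF]

end CostBenefit

theorem IsGreedyKnapsackRun.apply_singleton_le_of_fits {V : Type*} [Fintype V] [DecidableEq V]
    {f : Finset V → ℝ} {s : V → ℝ} {C : ℝ} {S R : ℕ → Finset V}
    (h : IsGreedyKnapsackRun (marginalGain f) s C S R) (hmono : Monotone f) {y : V}
    (hy : s y ≤ C) : f {y} ≤ f (S (Fintype.card V)) := by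
  have hQ0 : S 0 = ∅ ∧ y ∈ R 0 := ⟨h.S_zero, h.R_zero ▸ mem_univ y⟩
  have hQn : ¬ (S (Fintype.card V) = ∅ ∧ y ∈ R (Fintype.card V)) := by
    rw [h.R_card_eq_empty]; simp
  obtain ⟨τ, hτ, ⟨hSτ, hyR⟩, hQτ'⟩ :=
    Nat.exists_lt_and_not_succ (P := fun t => S t = ∅ ∧ y ∈ R t) hQ0 hQn
  obtain ⟨x, -, hmax, hR, hS⟩ := h.exists_step hτ
  simp only [hSτ, sum_empty, zero_add] at hS
  split_ifs at hS with hfit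
  · have hyx : f {y} ≤ f {x} := by simpa [marginalGain, hSτ] using hmax y hyR
    calc f {y} ≤ f {x} := hyx
      _ = f (S (τ + 1)) := by rw [hS, insert_empty]
      _ ≤ f (S (Fintype.card V)) := hmono (h.S_mono (by omega) le_rfl)
  · obtain rfl : y = x := by
      by_contra hyx
      exact hQτ' ⟨hS, hR ▸ mem_erase.mpr ⟨hyx, hyR⟩⟩
    exact absurd hy hfit

theorem knapsack_double_greedy_approx_general
    {V : Type*} [Fintype V] [DecidableEq V]
    (f : Finset V → ℝ) (s : V → ℝ) (C : ℝ)
    (hempty : f ∅ = 0)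
    (hmono : ∀ A B : Finset V, A ⊆ B → f A ≤ f B)
    (hsub : ∀ A B : Finset V, A ⊆ B → ∀ x ∉ B,
      f (insert x B) - f B ≤ f (insert x A) - f A)
    (hs : ∀ k, 0 < s k) (hC : 0 < C)
    -- cost-benefit greedy run
    (S1 R1 : ℕ → Finset V)
    (hS10 : S1 0 = ∅) (hR10 : R1 0 = Finset.univ)
    (hstep1 : ∀ t, (R1 t).Nonempty → ∃ x ∈ R1 t,
      (∀ y ∈ R1 t, (f (insert y (S1 t)) - f (S1 t)) / s y
          ≤ (f (insert x (S1 t)) - f (S1 t)) / s x) ∧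
      R1 (t + 1) = (R1 t).erase x ∧
      S1 (t + 1) = if (∑ k ∈ S1 t, s k) + s x ≤ C then insert x (S1 t) else S1 t)
    -- uniform greedy run
    (S2 R2 : ℕ → Finset V)
    (hS20 : S2 0 = ∅) (hR20 : R2 0 = Finset.univ)
    (hstep2 : ∀ t, (R2 t).Nonempty → ∃ x ∈ R2 t,
      (∀ y ∈ R2 t, f (insert y (S2 t)) - f (S2 t)
          ≤ f (insert x (S2 t)) - f (S2 t)) ∧
      R2 (t + 1) = (R2 t).erase x ∧
      S2 (t + 1) = if (∑ k ∈ S2 t, s k) + s x ≤ C then insert x (S2 t) else S2 t) :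
    ∀ T : Finset V, (∑ k ∈ T, s k) ≤ C →
      (1 / 2) * (1 - 1 / Real.exp 1) * f T
        ≤ max (f (S1 (Fintype.card V))) (f (S2 (Fintype.card V))) := by
  intro T hT
  have h1 : IsGreedyKnapsackRun (fun A y => marginalGain f A y / s y) s C S1 R1 :=
    ⟨hS10, hR10, hstep1⟩
  have h2 : IsGreedyKnapsackRun (marginalGain f) s C S2 R2 := ⟨hS20, hR20, hstep2⟩
  have hmono' : Monotone f := fun A B hAB => hmono A B hAB
  have hfT : 0 ≤ f T := hempty ▸ hmono ∅ T (empty_subset T)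
  have he : 0 < exp (-1) := exp_pos _
  rw [one_div (exp 1), ← exp_neg]
  have hM1 := le_max_left (f (S1 (Fintype.card V))) (f (S2 (Fintype.card V)))
  have hM2 := le_max_right (f (S1 (Fintype.card V))) (f (S2 (Fintype.card V)))
  rcases h1.subset_or_exists_singleton hmono' hsub hs hC hT with hTS | ⟨z, hzT, hz⟩
  · nlinarith [hmono' hTS]
  · have hzC : s z ≤ C := (single_le_sum (fun k _ => (hs k).le) hzT).trans hT
    rw [hempty] at hz
    linarith [h2.apply_singleton_le_of_fits hmono' hzC]

/-- Knapsack-constrained greedy bound (Leskovec et al.): for a monotone submodular `f`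
with `f(∅)=0`, item sizes `s_k > 0` and budget `C`, run two greedy procedures over all
`Fintype.card V` candidate rounds, each time removing the current argmax candidate and
adding it to the selection only if it fits in the remaining budget:
`S1` is cost-benefit greedy (argmax of marginal gain divided by size) and `S2` is the
uniform greedy (argmax of raw marginal gain). Then
`max(f(S1), f(S2)) ≥ ½ (1 - 1/e) · max{ f(T) : Σ_{k∈T} s_k ≤ C }`. -/
theorem knapsack_double_greedy_approx
    {V : Type*} [Fintype V] [DecidableEq V]
    (f : Finset V → ℝ) (s : V → ℝ) (C : ℝ)
    (hempty : f ∅ = 0)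
    (hmono : ∀ A B : Finset V, A ⊆ B → f A ≤ f B)
    (hsub : ∀ A B : Finset V, A ⊆ B → ∀ x ∉ B,
      f (insert x B) - f B ≤ f (insert x A) - f A)
    (hs : ∀ k, 0 < s k) (hC : 0 < C)
    -- cost-benefit greedy run
    (S1 R1 : ℕ → Finset V)
    (hS10 : S1 0 = ∅) (hR10 : R1 0 = Finset.univ)
    (hstep1 : ∀ t, (R1 t).Nonempty → ∃ x ∈ R1 t,
      (∀ y ∈ R1 t, (f (insert y (S1 t)) - f (S1 t)) / s y
          ≤ (f (insert x (S1 t)) - f (S1 t)) / s x) ∧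
      R1 (t + 1) = (R1 t).erase x ∧
      S1 (t + 1) = if (∑ k ∈ S1 t, s k) + s x ≤ C then insert x (S1 t) else S1 t)
    (hend1 : ∀ t, R1 t = ∅ → S1 (t + 1) = S1 t ∧ R1 (t + 1) = ∅)
    -- uniform greedy run
    (S2 R2 : ℕ → Finset V)
    (hS20 : S2 0 = ∅) (hR20 : R2 0 = Finset.univ)
    (hstep2 : ∀ t, (R2 t).Nonempty → ∃ x ∈ R2 t,
      (∀ y ∈ R2 t, f (insert y (S2 t)) - f (S2 t)
          ≤ f (insert x (S2 t)) - f (S2 t)) ∧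
      R2 (t + 1) = (R2 t).erase x ∧
      S2 (t + 1) = if (∑ k ∈ S2 t, s k) + s x ≤ C then insert x (S2 t) else S2 t)
    (hend2 : ∀ t, R2 t = ∅ → S2 (t + 1) = S2 t ∧ R2 (t + 1) = ∅) :
    ∀ T : Finset V, (∑ k ∈ T, s k) ≤ C →
      (1 / 2) * (1 - 1 / Real.exp 1) * f T
        ≤ max (f (S1 (Fintype.card V))) (f (S2 (Fintype.card V))) :=
  knapsack_double_greedy_approx_general f s C hempty hmono hsub hs hC S1 R1 hS10 hR10 hstep1 S2 R2
    hS20 hR20 hstep2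
end

section
/- For maximizing a monotone submodular function f with f(∅)=0 subject to a matroid constraint, the greedy algorithm (adding at each step a feasible element with maximal marginal gain) outputs S* with f(S*) ≥ ½ · max{ f(S) : S independent in the matroid }. -/
open Finset

lemma greedy_sum_marginal_aux {V : Type*} [DecidableEq V]
    (f : Finset V → ℝ)
    (hsub : ∀ A B : Finset V, A ⊆ B → ∀ x ∉ B,
      f (insert x B) - f B ≤ f (insert x A) - f A)
    (A : Finset V) :
    ∀ D : Finset V, Disjoint D A →
      f (A ∪ D) ≤ f A + ∑ b ∈ D, (f (insert b A) - f A) := by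
  intro D
  induction D using Finset.induction_on with
  | empty => intro _; simp
  | @insert b D' hb ih =>
    intro hdisj
    rw [Finset.disjoint_insert_left] at hdisj
    have hbnot : b ∉ A ∪ D' := by
      simp only [Finset.mem_union, not_or]
      exact ⟨hdisj.1, hb⟩
    have h1 := hsub A (A ∪ D') Finset.subset_union_left b hbnot
    have h2 := ih hdisj.2
    rw [Finset.union_insert, Finset.sum_insert hb]
    linarith

/-- Greedy 1/2-approximation for maximizing a monotone submodular function `f` with
`f(∅)=0` subject to a matroid constraint (independent sets `Ind`): if the greedy run
`S 0 = ∅, …, S T` adds at each step a feasible element of maximal marginal gain and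
stops when no feasible element remains, then `f(S T) ≥ ½ · f(B)` for every
independent set `B`. -/
theorem greedy_matroid_half_approx
    {V : Type*} [Fintype V] [DecidableEq V]
    (f : Finset V → ℝ) (Ind : Finset V → Prop)
    (hempty : f ∅ = 0)
    (hmono : ∀ A B : Finset V, A ⊆ B → f A ≤ f B)
    (hsub : ∀ A B : Finset V, A ⊆ B → ∀ x ∉ B,
      f (insert x B) - f B ≤ f (insert x A) - f A)
    (hInd_empty : Ind ∅)
    (hdown : ∀ A B : Finset V, A ⊆ B → Ind B → Ind A)
    (hexch : ∀ A B : Finset V, Ind A → Ind B → A.card < B.card →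
      ∃ x ∈ B \ A, Ind (insert x A))
    (T : ℕ) (S : ℕ → Finset V) (hS0 : S 0 = ∅)
    (hstep : ∀ t < T, ∃ x ∉ S t, Ind (insert x (S t)) ∧
      S (t + 1) = insert x (S t) ∧
      ∀ y ∉ S t, Ind (insert y (S t)) → f (insert y (S t)) ≤ f (insert x (S t)))
    (hterm : ∀ x ∉ S T, ¬ Ind (insert x (S T))) :
    ∀ B : Finset V, Ind B → (1 / 2) * f B ≤ f (S T) := by
  intro B hB
  classical
  -- basic facts about the greedy run
  have hsubset : ∀ t < T, S t ⊆ S (t + 1) := by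
    intro t ht
    obtain ⟨x, _, _, hEq, _⟩ := hstep t ht
    rw [hEq]; exact Finset.subset_insert _ _
  have hmonoS : ∀ a b : ℕ, a ≤ b → b ≤ T → S a ⊆ S b := by
    intro a b hab hbT
    induction b with
    | zero => simpa [Nat.le_zero.mp hab] using Finset.Subset.refl _
    | succ n ih =>
      rcases Nat.lt_or_ge a (n + 1) with h | h
      · exact (ih (Nat.lt_succ_iff.mp h) (le_of_lt hbT)).trans
          (hsubset n (Nat.lt_of_lt_of_le (Nat.lt_succ_self n) hbT))
      · have : a = n + 1 := le_antisymm hab h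
        rw [this]
  have hcard : ∀ t ≤ T, (S t).card = t := by
    intro t htT
    induction t with
    | zero => simp [hS0]
    | succ n ih =>
      obtain ⟨x, hx, _, hEq, _⟩ := hstep n htT
      rw [hEq, Finset.card_insert_of_notMem hx, ih (le_of_lt htT)]
  have hIndS : ∀ t ≤ T, Ind (S t) := by
    intro t htT
    induction t with
    | zero => simpa [hS0] using hInd_empty
    | succ n _ =>
      obtain ⟨x, _, hxI, hEq, _⟩ := hstep n htT
      rw [hEq]; exact hxI
  -- |B| ≤ T
  have hBcard : B.card ≤ T := by
    by_contra h
    push_neg at h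
    have : (S T).card < B.card := by rw [hcard T le_rfl]; exact h
    obtain ⟨x, hx, hxI⟩ := hexch (S T) B (hIndS T le_rfl) hB this
    rw [Finset.mem_sdiff] at hx
    exact hterm x hx.2 hxI
  -- Hall's theorem: match each b ∈ B \ S T to a greedy step where it was feasible
  set D : Finset V := B \ S T with hD
  let r : V → Finset ℕ := fun b =>
    (Finset.range T).filter (fun t => b ∉ S t ∧ Ind (insert b (S t)))
  have hall : ∀ s : Finset {b // b ∈ D}, s.card ≤ (s.biUnion (fun b => r b.val)).card := by
    intro s
    set W : Finset V := s.image Subtype.val with hW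
    have hWcard : W.card = s.card := Finset.card_image_of_injective _ Subtype.val_injective
    have hWB : W ⊆ B := by
      intro x hx
      rw [hW, Finset.mem_image] at hx
      obtain ⟨b, _, rfl⟩ := hx
      exact (Finset.mem_sdiff.mp b.2).1
    have hWInd : Ind W := hdown W B hWB hB
    have hrange : Finset.range s.card ⊆ s.biUnion (fun b => r b.val) := by
      intro t ht
      rw [Finset.mem_range] at ht
      have hsT : s.card ≤ T := by
        rw [← hWcard]; exact le_trans (Finset.card_le_card hWB) hBcard
      have htT : t < T := lt_of_lt_of_le ht hsT
      have hcardt : (S t).card < W.card := by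
        rw [hcard t (le_of_lt htT), hWcard]; exact ht
      obtain ⟨x, hx, hxI⟩ := hexch (S t) W (hIndS t (le_of_lt htT)) hWInd hcardt
      rw [Finset.mem_sdiff] at hx
      obtain ⟨b, hbs, hbx⟩ := Finset.mem_image.mp (hW ▸ hx.1)
      rw [Finset.mem_biUnion]
      refine ⟨b, hbs, ?_⟩
      simp only [r, Finset.mem_filter, Finset.mem_range]
      rw [hbx]
      exact ⟨htT, hx.2, hxI⟩
    calc s.card = (Finset.range s.card).card := by rw [Finset.card_range]
    _ ≤ _ := Finset.card_le_card hrange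
  obtain ⟨g, hginj, hgmem⟩ :=
    (Finset.all_card_le_biUnion_card_iff_exists_injective (fun b : {b // b ∈ D} => r b.val)).mp hall
  -- gains
  have hgain_nonneg : ∀ t ∈ Finset.range T, (0:ℝ) ≤ f (S (t+1)) - f (S t) := by
    intro t ht
    rw [Finset.mem_range] at ht
    have := hmono (S t) (S (t+1)) (hsubset t ht)
    linarith
  have htel : ∑ t ∈ Finset.range T, (f (S (t+1)) - f (S t)) = f (S T) := by
    rw [Finset.sum_range_sub (fun t => f (S t)), hS0, hempty, sub_zero]
  -- bound marginal of each b ∈ D at S T by its matched gain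
  have hmarg : ∀ b : {b // b ∈ D},
      f (insert b.val (S T)) - f (S T) ≤ f (S (g b + 1)) - f (S (g b)) := by
    intro b
    have hgb := hgmem b
    simp only [r, Finset.mem_filter, Finset.mem_range] at hgb
    obtain ⟨hgT, hbnot, hbI⟩ := hgb
    have hbnotT : b.val ∉ S T := (Finset.mem_sdiff.mp b.2).2
    have h1 := hsub (S (g b)) (S T) (hmonoS (g b) T (le_of_lt hgT) le_rfl) b.val hbnotT
    obtain ⟨x, hx, hxI, hEq, hopt⟩ := hstep (g b) hgT
    have h2 := hopt b.val hbnot hbI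
    rw [← hEq] at h2
    have h3 : f (S (g b)) ≤ f (insert b.val (S (g b))) :=
      hmono _ _ (Finset.subset_insert _ _)
    linarith
  -- sum of matched gains ≤ f (S T)
  have hsum2 : ∑ b ∈ D.attach, (f (S (g b + 1)) - f (S (g b))) ≤ f (S T) := by
    rw [← htel]
    have him : D.attach.image g ⊆ Finset.range T := by
      intro t ht
      rw [Finset.mem_image] at ht
      obtain ⟨b, _, rfl⟩ := ht
      have hgb := hgmem b
      simp only [r, Finset.mem_filter, Finset.mem_range] at hgb
      exact Finset.mem_range.mpr hgb.1
    calc ∑ b ∈ D.attach, (f (S (g b + 1)) - f (S (g b)))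
        = ∑ t ∈ D.attach.image g, (f (S (t+1)) - f (S t)) := by
          rw [Finset.sum_image (fun a _ b _ h => hginj h)]
      _ ≤ ∑ t ∈ Finset.range T, (f (S (t+1)) - f (S t)) :=
          Finset.sum_le_sum_of_subset_of_nonneg him (fun t ht _ => hgain_nonneg t ht)
  -- combine
  have hBsub : B ⊆ S T ∪ D := by
    intro x hx
    by_cases hxS : x ∈ S T
    · exact Finset.mem_union_left _ hxS
    · exact Finset.mem_union_right _ (Finset.mem_sdiff.mpr ⟨hx, hxS⟩)
  have hdisj : Disjoint D (S T) := Finset.sdiff_disjoint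
  have hsum1 := greedy_sum_marginal_aux f hsub (S T) D hdisj
  have hfB : f B ≤ f (S T ∪ D) := hmono _ _ hBsub
  have hsumD : ∑ b ∈ D, (f (insert b (S T)) - f (S T))
      ≤ ∑ b ∈ D.attach, (f (S (g b + 1)) - f (S (g b))) := by
    rw [← Finset.sum_attach D (fun b => f (insert b (S T)) - f (S T))]
    exact Finset.sum_le_sum (fun b _ => hmarg b)
  linarith
end
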